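/- For the simple random walk with up-probability p started at 0, let T_0 be the first return time to 0 (after time 0) and T^{|k|} the first hitting time of {+k, -k}. Then P(T_0 < T^{|k|}) is strictly increasing in p on [0, 1/2] and strictly decreasing in p on [1/2, 1]. -/

import Mathlib

open scoped Classical
noncomputable section

def walkPos {n : ℕ} (x : Fin n → Bool) (m : ℕ) : ℤ :=
  ∑ i : Fin n, if (i : ℕ) < m then (if x i then (1 : ℤ) else -1) else 0

def walkWt {n : ℕ} (p : ℝ) (x : Fin n → Bool) : ℝ :=
  ∏ i : Fin n, if x i then p else 1 - p

/-- `P(T_0 < T^{|k|})`: the probability that the walk started at 0 returns to 0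
(after time 0) before hitting `+k` or `-k`.  It is the sum over all `n` of the
probabilities of paths of length `n` that end at 0, do not visit 0 at any
intermediate time `0 < m < n`, and stay strictly inside `(-k, k)` before time `n`. -/
def retProb (p : ℝ) (k : ℕ) : ℝ :=
  ∑' n : ℕ, ∑ x : Fin n → Bool,
    if (0 < n ∧ walkPos x n = 0 ∧
        ∀ m, 0 < m → m < n → walkPos x m ≠ 0 ∧ |walkPos x m| < (k : ℤ))
    then walkWt p x else 0

/-! Every path counted by `retProb p k` ends at 0, so it has as many up-steps as down-steps and
its weight is a power of `p (1 - p)`. Hence every term of the series is monotone in `p (1 - p)`,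
which increases strictly on `[0, 1/2]` and decreases strictly on `[1/2, 1]`; for `k ≥ 2` the
term of the two-step paths is `2 p (1 - p)`, which makes the comparison strict. The series
converges because first returns at different times are disjoint events, so its partial sums are
at most 1. -/

open Finset

lemma walkWt_nonneg {n : ℕ} {p : ℝ} (hp₀ : 0 ≤ p) (hp₁ : p ≤ 1) (x : Fin n → Bool) :
    0 ≤ walkWt p x :=
  prod_nonneg fun i _ => by split <;> linarith

lemma sum_walkWt (p : ℝ) (n : ℕ) : ∑ x : Fin n → Bool, walkWt p x = 1 := by
  have := Fintype.sum_pow (fun b : Bool => if b then p else 1 - p) n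
  simp only [Fintype.sum_bool, if_true, Bool.false_eq_true, if_false, add_sub_cancel, one_pow]
    at this
  exact this.symm

lemma walkWt_append (p : ℝ) {n d : ℕ} (x : Fin n → Bool) (z : Fin d → Bool) :
    walkWt p (Fin.append x z) = walkWt p x * walkWt p z := by
  simp only [walkWt, Fin.prod_univ_add, Fin.append_left, Fin.append_right]

lemma sum_mul_walkWt_take (p : ℝ) {n N : ℕ} (h : n ≤ N) (f : (Fin n → Bool) → ℝ) :
    ∑ y : Fin N → Bool, f (Fin.take n h y) * walkWt p y = ∑ x, f x * walkWt p x := by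
  obtain ⟨d, rfl⟩ := Nat.exists_eq_add_of_le h
  rw [← (Fin.appendEquiv n d).sum_comp, Fintype.sum_prod_type]
  simp only [Fin.appendEquiv, Equiv.coe_fn_mk, Fin.take_append_left n le_rfl, Fin.take_eq_self,
    walkWt_append, ← mul_assoc, ← mul_sum, sum_walkWt, mul_one]

/-- A Kraft-type inequality: if no word of the family `P` extends another one, then, after
extending all words of length `< N` to length `N`, each word of length `N` extends at most one of
them. -/
lemma sum_range_sum_walkWt_le_one {p : ℝ} (hp₀ : 0 ≤ p) (hp₁ : p ≤ 1)
    (P : ∀ n, (Fin n → Bool) → Prop)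
    (hP : ∀ {n N : ℕ} (h : n < N) (y : Fin N → Bool), P n (Fin.take n h.le y) → ¬ P N y)
    (N : ℕ) : ∑ n ∈ range N, ∑ x : Fin n → Bool, (if P n x then walkWt p x else 0) ≤ 1 := by
  let Q (n : ℕ) (y : Fin N → Bool) : Prop := ∃ h : n < N, P n (Fin.take n h.le y)
  have hext : ∀ n ∈ range N, ∑ x : Fin n → Bool, (if P n x then walkWt p x else 0) =
      ∑ y : Fin N → Bool, (if Q n y then 1 else 0) * walkWt p y := fun n hn => by
    have hn : n < N := mem_range.1 hn
    simpa only [Q, exists_prop_of_true hn, ite_zero_mul, one_mul] using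
      (sum_mul_walkWt_take p hn.le fun x => if P n x then (1 : ℝ) else 0).symm
  have hQ_lt : ∀ {a b} y, a < b → Q a y → ¬ Q b y := by
    rintro a b y hab ⟨ha, hPa⟩ ⟨hb, hPb⟩
    exact hP hab (Fin.take b hb.le y) (by rwa [Fin.take_take]) hPb
  have hQ : ∀ y, ∑ n ∈ range N, (if Q n y then (1 : ℝ) else 0) ≤ 1 := fun y => by
    rw [sum_boole, Nat.cast_le_one, card_le_one]
    simp only [mem_filter]
    rintro a ⟨-, hQa⟩ b ⟨-, hQb⟩
    by_contra hab
    rcases Nat.lt_or_gt_of_ne hab with hab | hab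
    exacts [hQ_lt y hab hQa hQb, hQ_lt y hab hQb hQa]
  calc ∑ n ∈ range N, ∑ x : Fin n → Bool, (if P n x then walkWt p x else 0)
      = ∑ y : Fin N → Bool, (∑ n ∈ range N, if Q n y then (1 : ℝ) else 0) * walkWt p y := by
        rw [sum_congr rfl hext, sum_comm]
        simp only [sum_mul]
    _ ≤ ∑ y : Fin N → Bool, walkWt p y :=
        sum_le_sum fun y _ => mul_le_of_le_one_left (walkWt_nonneg hp₀ hp₁ y) (hQ y)
    _ = 1 := sum_walkWt p N

lemma walkPos_take {n N : ℕ} (h : n ≤ N) (y : Fin N → Bool) {m : ℕ} (hm : m ≤ n) :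
    walkPos (Fin.take n h y) m = walkPos y m := by
  obtain ⟨d, rfl⟩ := Nat.exists_eq_add_of_le h
  have hlate : ∀ i : Fin d, ¬ ((Fin.natAdd n i : ℕ) < m) := fun i => by
    simp only [Fin.val_natAdd]; omega
  simp only [walkPos, Fin.sum_univ_add, hlate, if_false, sum_const_zero, add_zero]
  rfl

lemma walkPos_self {n : ℕ} (x : Fin n → Bool) :
    walkPos x n = (#{i | x i = true} : ℤ) - #{i | x i ≠ true} := by
  simp only [walkPos, Fin.is_lt, if_true, sum_ite, sum_const, nsmul_eq_mul, mul_one, mul_neg,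
    sub_eq_add_neg]

lemma walkWt_of_walkPos_eq_zero {n : ℕ} (p : ℝ) {x : Fin n → Bool} (hx : walkPos x n = 0) :
    walkWt p x = (p * (1 - p)) ^ #{i | x i = true} := by
  have hcard : #{i | x i = true} = #{i | x i ≠ true} := by
    rw [walkPos_self] at hx; omega
  rw [walkWt, prod_ite, prod_const, prod_const, mul_pow, hcard]

def IsFirstReturn (k : ℕ) {n : ℕ} (x : Fin n → Bool) : Prop :=
  0 < n ∧ walkPos x n = 0 ∧ ∀ m, 0 < m → m < n → walkPos x m ≠ 0 ∧ |walkPos x m| < (k : ℤ)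

lemma IsFirstReturn.not_of_take {k n N : ℕ} (h : n < N) (y : Fin N → Bool)
    (hy : IsFirstReturn k (Fin.take n h.le y)) : ¬ IsFirstReturn k y := fun hy' =>
  (hy'.2.2 n hy.1 h).1 (walkPos_take h.le y le_rfl ▸ hy.2.1)

def firstReturnWeight (p : ℝ) (k n : ℕ) : ℝ :=
  ∑ x : Fin n → Bool, if IsFirstReturn k x then walkWt p x else 0

lemma retProb_eq_tsum_firstReturnWeight (p : ℝ) (k : ℕ) :
    retProb p k = ∑' n, firstReturnWeight p k n := by
  unfold retProb firstReturnWeight IsFirstReturn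
  convert rfl

lemma firstReturnWeight_nonneg {p : ℝ} (hp : 0 ≤ p * (1 - p)) (k n : ℕ) :
    0 ≤ firstReturnWeight p k n :=
  sum_nonneg fun x _ => by
    split_ifs with hx
    · exact walkWt_of_walkPos_eq_zero p hx.2.1 ▸ pow_nonneg hp _
    · rfl

lemma firstReturnWeight_mono {p q : ℝ} (hp : 0 ≤ p * (1 - p)) (hpq : p * (1 - p) ≤ q * (1 - q))
    (k n : ℕ) : firstReturnWeight p k n ≤ firstReturnWeight q k n :=
  sum_le_sum fun x _ => by
    split_ifs with hx
    · rw [walkWt_of_walkPos_eq_zero p hx.2.1, walkWt_of_walkPos_eq_zero q hx.2.1]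
      exact pow_le_pow_left₀ hp hpq _
    · rfl

lemma summable_firstReturnWeight {p : ℝ} (hp₀ : 0 ≤ p) (hp₁ : p ≤ 1) (k : ℕ) :
    Summable (firstReturnWeight p k) :=
  summable_of_sum_range_le (firstReturnWeight_nonneg (mul_nonneg hp₀ (sub_nonneg.2 hp₁)) k)
    (sum_range_sum_walkWt_le_one hp₀ hp₁ _ IsFirstReturn.not_of_take)

lemma firstReturnWeight_two (p : ℝ) {k : ℕ} (hk : 2 ≤ k) :
    firstReturnWeight p k 2 = 2 * (p * (1 - p)) := by
  rw [firstReturnWeight, ← (finTwoArrowEquiv Bool).symm.sum_comp, Fintype.sum_prod_type]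
  have hone : ∀ P : ℕ → Prop, (∀ m, 0 < m → m ≤ 1 → P m) ↔ P 1 :=
    fun P => ⟨fun h => h 1 one_pos le_rfl, fun h m h₀ h₁ => (by omega : m = 1) ▸ h⟩
  have hk' : (1 : ℤ) < k := by exact_mod_cast hk
  simp [IsFirstReturn, walkPos, walkWt, Fin.sum_univ_two, Fin.prod_univ_two, hone, hk', two_mul,
    mul_comm (1 - p) p]

lemma retProb_lt_retProb {p q : ℝ} (hp : 0 ≤ p * (1 - p)) (hq₀ : 0 ≤ q) (hq₁ : q ≤ 1)
    (hpq : p * (1 - p) < q * (1 - q)) {k : ℕ} (hk : 2 ≤ k) : retProb p k < retProb q k := by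
  rw [retProb_eq_tsum_firstReturnWeight, retProb_eq_tsum_firstReturnWeight]
  refine (summable_firstReturnWeight hq₀ hq₁ k).tsum_lt_tsum_of_nonneg (i := 2)
    (firstReturnWeight_nonneg hp k) (firstReturnWeight_mono hp hpq.le k) ?_
  rw [firstReturnWeight_two p hk, firstReturnWeight_two q hk]
  linarith

/-- `P(T_0 < T^{|k|})` is strictly increasing in `p` on `[0, 1/2]` and strictly
decreasing in `p` on `[1/2, 1]`. -/
theorem retProb_strictMono (k : ℕ) (hk : 2 ≤ k) :
    (∀ p q : ℝ, 0 ≤ p → p < q → q ≤ 1 / 2 → retProb p k < retProb q k) ∧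
    (∀ p q : ℝ, 1 / 2 ≤ p → p < q → q ≤ 1 → retProb q k < retProb p k) := by
  refine ⟨fun p q hp hpq hq => ?_, fun p q hp hpq hq => ?_⟩
  · exact retProb_lt_retProb (by nlinarith) (by linarith) (by linarith) (by nlinarith) hk
  · exact retProb_lt_retProb (by nlinarith) (by linarith) (by linarith) (by nlinarith) hk
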